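/- arXiv:1801.10401 — 5 statements merged into one kernel-verified Lean document; each statement's English description precedes it below -/
import Mathlib

section
/- A DAG D satisfies the degree condition (for every vertex v with indegree greater than 1, every vertex reachable from v has outdegree at most 1) if and only if no subgraph of D is isomorphic to any member of the family F = {D_k : k ≥ 0}. -/
variable {V : Type*} [Fintype V] [DecidableEq V]

/-- Arc adjacency of a digraph given by its finite arc set. -/
def ArcAdj (A : Finset (V × V)) : V → V → Prop := fun u v => (u, v) ∈ A

/-- A digraph is a DAG if it contains no directed cycle. -/
def IsDAG (A : Finset (V × V)) : Prop := ∀ v : V, ¬ Relation.TransGen (ArcAdj A) v v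

/-- Indegree of a vertex. -/
def inDeg (A : Finset (V × V)) (v : V) : ℕ := (A.filter fun e => e.2 = v).card

/-- Outdegree of a vertex. -/
def outDeg (A : Finset (V × V)) (v : V) : ℕ := (A.filter fun e => e.1 = v).card

/-- A source is a vertex of indegree 0. -/
def IsSource (A : Finset (V × V)) (v : V) : Prop := inDeg A v = 0

/-- A sink is a vertex of outdegree 0. -/
def IsSink (A : Finset (V × V)) (v : V) : Prop := outDeg A v = 0

/-- The arcs (consecutive pairs of vertices) of a path given as a list of vertices. -/
def arcsOf (p : List V) : List (V × V) := p.zip p.tail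

/-- A source-sink path: a directed path (with at least one arc) starting at a
source and ending at a sink. -/
def IsSourceSinkPath (A : Finset (V × V)) (p : List V) : Prop :=
  2 ≤ p.length ∧ List.Chain' (ArcAdj A) p ∧ p.Nodup ∧
  (∃ s, p.head? = some s ∧ IsSource A s) ∧
  (∃ t, p.getLast? = some t ∧ IsSink A t)

/-- An arc is private if exactly one source-sink path contains it. -/
def IsPrivate (A : Finset (V × V)) (e : V × V) : Prop :=
  ∃! p : List V, IsSourceSinkPath A p ∧ e ∈ arcsOf p

/-- A funnel: every source-sink path contains at least one private arc. -/
def IsFunnel (A : Finset (V × V)) : Prop :=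
  ∀ p : List V, IsSourceSinkPath A p → ∃ e ∈ arcsOf p, IsPrivate A e

/-- The arc-deletion distance to a funnel: the minimum number of arcs whose
deletion turns the digraph into a funnel. -/
noncomputable def funnelDist (A : Finset (V × V)) : ℕ :=
  sInf {k | ∃ B ⊆ A, B.card = k ∧ IsFunnel (A \ B)}

/-- `D` contains the forbidden graph `D_k` as a subgraph: there are distinct
vertices `u₁, u₂, v₀, …, v_k, w₁, w₂` with arcs `(u₁,v₀)`, `(u₂,v₀)`,
`(v_k,w₁)`, `(v_k,w₂)` and `(v_i, v_{i+1})` for `0 ≤ i ≤ k-1`. -/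
def ContainsDk (A : Finset (V × V)) (k : ℕ) : Prop :=
  ∃ (u₁ u₂ w₁ w₂ : V) (vs : Fin (k + 1) → V),
    (u₁ :: u₂ :: w₁ :: w₂ :: List.ofFn vs).Nodup ∧
    (u₁, vs 0) ∈ A ∧ (u₂, vs 0) ∈ A ∧
    (vs (Fin.last k), w₁) ∈ A ∧ (vs (Fin.last k), w₂) ∈ A ∧
    ∀ i : Fin k, (vs i.castSucc, vs i.succ) ∈ A

/-! A vertex of indegree at least two that reaches a vertex of outdegree at least two along a
walk `v₀ → ⋯ → v_k` yields a copy of `D_k`, and conversely every copy of `D_k` is such a pair.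
Acyclicity makes the walk a path and keeps the two in-neighbours of `v₀` and the two
out-neighbours of `v_k` off it and apart from each other: any coincidence would close a
directed cycle. -/

namespace Relation

variable {α : Type*} {r : α → α → Prop}

theorem ReflTransGen.exists_fin_chain {a b : α} (h : ReflTransGen r a b) :
    ∃ (k : ℕ) (f : Fin (k + 1) → α), f 0 = a ∧ f (Fin.last k) = b ∧
      ∀ i : Fin k, r (f i.castSucc) (f i.succ) := by
  induction h with
  | refl => exact ⟨0, fun _ => a, rfl, rfl, Fin.elim0⟩
  | tail _ hbc ih =>
    obtain ⟨k, f, hf0, hfk, hf⟩ := ih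
    refine ⟨k + 1, Fin.snoc f _, ?_, Fin.snoc_last _ _, fun i => ?_⟩
    · rw [← Fin.castSucc_zero, Fin.snoc_castSucc, hf0]
    induction i using Fin.lastCases with
    | last => rwa [Fin.succ_last, Fin.snoc_last, Fin.snoc_castSucc, hfk]
    | cast i => rw [Fin.succ_castSucc, Fin.snoc_castSucc, Fin.snoc_castSucc]; exact hf i

theorem reflTransGen_of_fin_chain {k : ℕ} {f : Fin (k + 1) → α}
    (hf : ∀ i : Fin k, r (f i.castSucc) (f i.succ)) {i j : Fin (k + 1)} (hij : i ≤ j) :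
    ReflTransGen r (f i) (f j) := by
  refine ReflTransGen.lift f (fun _ _ h => h) _ _
    (reflTransGen_of_succ_of_le (fun a b => r (f a) (f b)) (fun a ha => ?_) hij)
  obtain ⟨a, rfl⟩ := Fin.exists_castSucc_eq.mpr (ne_of_lt (lt_of_lt_of_le ha.2 (Fin.le_last j)))
  simpa [Fin.orderSucc_castSucc] using hf a

end Relation

open Relation

section

omit [Fintype V]

variable {A : Finset (V × V)}

omit [DecidableEq V] in
theorem IsDAG.not_reflTransGen_of_mem (hA : IsDAG A) {x y : V}
    (hxy : (x, y) ∈ A) : ¬ ReflTransGen (ArcAdj A) y x :=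
  fun h => hA x (TransGen.head' hxy h)

omit [DecidableEq V] in
theorem IsDAG.injective_of_fin_chain (hA : IsDAG A) {k : ℕ}
    {f : Fin (k + 1) → V} (hf : ∀ i : Fin k, (f i.castSucc, f i.succ) ∈ A) :
    Function.Injective f := by
  have hne : ∀ i j, i < j → f i ≠ f j := by
    intro i j hij hfij
    obtain ⟨i, rfl⟩ := Fin.exists_castSucc_eq.mpr (ne_of_lt (lt_of_lt_of_le hij (Fin.le_last j)))
    refine hA.not_reflTransGen_of_mem (hf i) ?_
    rw [hfij]
    exact reflTransGen_of_fin_chain hf (Fin.castSucc_lt_iff_succ_le.mp hij)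
  intro i j hfij
  by_contra hij
  rcases lt_or_gt_of_ne hij with hlt | hgt
  exacts [hne i j hlt hfij, hne j i hgt hfij.symm]

theorem one_lt_inDeg_iff {v : V} :
    1 < inDeg A v ↔ ∃ x y, x ≠ y ∧ (x, v) ∈ A ∧ (y, v) ∈ A := by
  simp only [inDeg, Finset.one_lt_card, Finset.mem_filter]
  constructor
  · rintro ⟨⟨x, _⟩, ⟨hx, rfl⟩, ⟨y, _⟩, ⟨hy, rfl⟩, hne⟩
    exact ⟨x, y, by simpa using hne, hx, hy⟩
  · rintro ⟨x, y, hne, hx, hy⟩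
    exact ⟨(x, v), ⟨hx, rfl⟩, (y, v), ⟨hy, rfl⟩, by simpa using hne⟩

theorem one_lt_outDeg_iff {u : V} :
    1 < outDeg A u ↔ ∃ x y, x ≠ y ∧ (u, x) ∈ A ∧ (u, y) ∈ A := by
  simp only [outDeg, Finset.one_lt_card, Finset.mem_filter]
  constructor
  · rintro ⟨⟨_, x⟩, ⟨hx, rfl⟩, ⟨_, y⟩, ⟨hy, rfl⟩, hne⟩
    exact ⟨x, y, by simpa using hne, hx, hy⟩
  · rintro ⟨x, y, hne, hx, hy⟩
    exact ⟨(u, x), ⟨hx, rfl⟩, (u, y), ⟨hy, rfl⟩, by simpa using hne⟩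

theorem ContainsDk.exists_reflTransGen {k : ℕ} (h : ContainsDk A k) :
    ∃ v u, 1 < inDeg A v ∧ ReflTransGen (ArcAdj A) v u ∧ 1 < outDeg A u := by
  obtain ⟨u₁, u₂, w₁, w₂, vs, hnd, hu₁, hu₂, hw₁, hw₂, hvs⟩ := h
  simp only [List.nodup_cons, List.mem_cons, not_or] at hnd
  obtain ⟨⟨hu₁₂, -⟩, -, ⟨hw₁₂, -⟩, -⟩ := hnd
  exact ⟨vs 0, vs (Fin.last k), one_lt_inDeg_iff.mpr ⟨u₁, u₂, hu₁₂, hu₁, hu₂⟩,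
    reflTransGen_of_fin_chain hvs (Fin.zero_le _),
    one_lt_outDeg_iff.mpr ⟨w₁, w₂, hw₁₂, hw₁, hw₂⟩⟩

theorem IsDAG.containsDk_of_reflTransGen (hA : IsDAG A) {v u : V}
    (hv : 1 < inDeg A v) (hvu : ReflTransGen (ArcAdj A) v u) (hu : 1 < outDeg A u) :
    ∃ k, ContainsDk A k := by
  obtain ⟨k, vs, rfl, rfl, hvs⟩ := hvu.exists_fin_chain
  obtain ⟨u₁, u₂, hu₁₂, hu₁, hu₂⟩ := one_lt_inDeg_iff.mp hv
  obtain ⟨w₁, w₂, hw₁₂, hw₁, hw₂⟩ := one_lt_outDeg_iff.mp hu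
  have hfrom : ∀ i, ReflTransGen (ArcAdj A) (vs 0) (vs i) :=
    fun i => reflTransGen_of_fin_chain hvs (Fin.zero_le i)
  have hto : ∀ i, ReflTransGen (ArcAdj A) (vs i) (vs (Fin.last k)) :=
    fun i => reflTransGen_of_fin_chain hvs (Fin.le_last i)
  have hfrom_out : ∀ y, (vs (Fin.last k), y) ∈ A → ReflTransGen (ArcAdj A) (vs 0) y :=
    fun y hy => (hfrom _).tail hy
  have hin_ne : ∀ x, (x, vs 0) ∈ A → ∀ y, ReflTransGen (ArcAdj A) (vs 0) y → x ≠ y :=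
    fun x hx y hy hxy => hA.not_reflTransGen_of_mem hx (hxy ▸ hy)
  have hout_ne : ∀ y, (vs (Fin.last k), y) ∈ A → ∀ i, vs i ≠ y :=
    fun y hy i hiy => hA.not_reflTransGen_of_mem hy (hiy ▸ hto i)
  refine ⟨k, u₁, u₂, w₁, w₂, vs, ?_, hu₁, hu₂, hw₁, hw₂, hvs⟩
  simp only [List.nodup_cons, List.mem_cons, List.mem_ofFn, not_or, not_exists]
  exact ⟨⟨hu₁₂, hin_ne _ hu₁ _ (hfrom_out _ hw₁), hin_ne _ hu₁ _ (hfrom_out _ hw₂),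
      fun i h => hin_ne _ hu₁ _ (hfrom i) h.symm⟩,
    ⟨hin_ne _ hu₂ _ (hfrom_out _ hw₁), hin_ne _ hu₂ _ (hfrom_out _ hw₂),
      fun i h => hin_ne _ hu₂ _ (hfrom i) h.symm⟩,
    ⟨hw₁₂, hout_ne _ hw₁⟩, hout_ne _ hw₂, List.nodup_ofFn.mpr (hA.injective_of_fin_chain hvs)⟩

end

/-- A DAG satisfies the degree condition iff no subgraph of it is
isomorphic to any member of the family `F = {D_k : k ≥ 0}`. -/
theorem degree_condition_iff_no_Dk_subgraph (A : Finset (V × V)) (hdag : IsDAG A) :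
    (∀ v : V, 1 < inDeg A v →
        ∀ u : V, Relation.ReflTransGen (ArcAdj A) v u → outDeg A u ≤ 1) ↔
      ∀ k : ℕ, ¬ ContainsDk A k := by
  constructor
  · rintro hdeg k hk
    obtain ⟨v, u, hv, hvu, hu⟩ := hk.exists_reflTransGen
    exact (hdeg v hv u hvu).not_gt hu
  · intro hno v hv u hvu
    by_contra! hu
    obtain ⟨k, hk⟩ := hdag.containsDk_of_reflTransGen hv hvu hu
    exact hno k hk
end

section
/- In a funnel D = (V,A), the number of distinct source-sink paths is at most |A|, the number of arcs of D. -/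
variable {V : Type*} [Fintype V] [DecidableEq V]

/-!
Choosing a private arc on every source-sink path maps the source-sink paths into the arc set,
and the map is injective because a private arc lies on only one source-sink path.
-/

theorem List.IsChain.rel_of_mem_arcsOf {α : Type*} {R : α → α → Prop} {p : List α}
    (hp : p.IsChain R) {e : α × α} (he : e ∈ arcsOf p) : R e.1 e.2 := by
  induction hp with
  | nil | singleton => simp [arcsOf] at he
  | cons_cons hab _ ih =>
    rcases List.mem_cons.mp he with rfl | he
    · exact hab
    · exact ih he

theorem IsSourceSinkPath.mem_of_mem_arcsOf {α : Type*} [DecidableEq α] {A : Finset (α × α)}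
    {p : List α} (hp : IsSourceSinkPath A p) {e : α × α} (he : e ∈ arcsOf p) : e ∈ A :=
  hp.2.1.rel_of_mem_arcsOf he

theorem IsPrivate.eq_of_mem_arcsOf {α : Type*} [DecidableEq α] {A : Finset (α × α)} {e : α × α}
    (he : IsPrivate A e) {p q : List α} (hp : IsSourceSinkPath A p) (hep : e ∈ arcsOf p)
    (hq : IsSourceSinkPath A q) (heq : e ∈ arcsOf q) : p = q :=
  he.unique ⟨hp, hep⟩ ⟨hq, heq⟩

theorem card_sourceSinkPaths_le_card_arcs_general (A : Finset (V × V))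
    (hfun : IsFunnel A) :
    {p : List V | IsSourceSinkPath A p}.ncard ≤ A.card := by
  choose e he hpriv using fun p : {p : List V | IsSourceSinkPath A p} ↦ hfun p p.2
  let privateArc : {p : List V | IsSourceSinkPath A p} → A :=
    fun p ↦ ⟨e p, p.2.mem_of_mem_arcsOf (he p)⟩
  have hinj : Function.Injective privateArc := fun p q hpq ↦ by
    have hpq : e p = e q := congrArg Subtype.val hpq
    exact Subtype.ext <| (hpriv p).eq_of_mem_arcsOf p.2 (he p) q.2 (hpq ▸ he q)
  simpa [Nat.card_coe_set_eq] using Nat.card_le_card_of_injective privateArc hinj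

/-- In a funnel, the number of distinct source-sink paths is at
most the number of arcs. -/
theorem card_sourceSinkPaths_le_card_arcs (A : Finset (V × V)) (hdag : IsDAG A)
    (hfun : IsFunnel A) :
    {p : List V | IsSourceSinkPath A p}.ncard ≤ A.card :=
  card_sourceSinkPaths_le_card_arcs_general A hfun
end

section
/- Every funnel D = (V,A) satisfies |A| ≤ |V|²/4 + |V| − 2. -/
/-!
Let `M` be the set of vertices reachable from a vertex of indegree at least 2. In a funnel every
vertex of `M` has outdegree at most 1, and `M` is closed under successors, so `M` contains a sink
and carries at most `|M| - 1` arcs leaving its vertices. Every vertex outside `M` has indegree at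
most 1 and the complement contains a source, so at most `|Mᶜ| - 1` arcs end outside `M`. The
remaining arcs go from `Mᶜ` to `M`, and there are at most `|Mᶜ| |M| ≤ |V|² / 4` of those.
-/

variable {V : Type*} [Fintype V] [DecidableEq V]

open Finset Relation

theorem List.IsInfix.infix_append_or_infix_append {α : Type*} {l X Y Z : List α}
    (h : l <:+: X ++ Y ++ Z) (hl : l.length ≤ Y.length + 1) :
    l <:+: X ++ Y ∨ l <:+: Y ++ Z := by
  induction X with
  | nil => exact Or.inr (by simpa using h)
  | cons x X ih =>
    rw [List.cons_append, List.cons_append, List.infix_cons_iff] at h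
    rcases h with h | h
    · refine Or.inl (List.IsPrefix.isInfix (List.prefix_of_prefix_length_le h ?_ ?_))
      · exact List.prefix_append _ _
      · simp only [List.length_cons, List.length_append]; omega
    · exact (ih h).imp_left fun h' => h'.trans (List.infix_cons (List.infix_refl _))

theorem Finset.sum_le_card_sub_one {ι : Type*} [DecidableEq ι] {s : Finset ι} {f : ι → ℕ} {i : ι}
    (hi : i ∈ s) (hfi : f i = 0) (hf : ∀ j ∈ s, f j ≤ 1) : ∑ j ∈ s, f j ≤ #s - 1 := by
  rw [← sum_erase s hfi, ← card_erase_of_mem hi]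
  simpa using sum_le_card_nsmul _ _ 1 fun j hj => hf j (mem_of_mem_erase hj)

theorem Nat.sub_one_add_sub_one_add_mul_le (a b : ℕ) :
    (a - 1) + (b - 1) + a * b ≤ (a + b) ^ 2 / 4 + (a + b) - 2 := by
  have hamgm : a * b ≤ (a + b) ^ 2 / 4 :=
    (Nat.le_div_iff_mul_le four_pos).2 (by linarith [four_mul_le_sq_add a b])
  rcases Nat.eq_zero_or_pos (a * b) with hab | hab
  · have : 2 ≤ a + b → 1 ≤ (a + b) ^ 2 / 4 := fun h =>
      (Nat.le_div_iff_mul_le four_pos).2 (by nlinarith)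
    rcases Nat.mul_eq_zero.1 hab with rfl | rfl <;> omega
  · have := Nat.pos_of_mul_pos_right hab
    have := Nat.pos_of_mul_pos_left hab
    omega

theorem wellFounded_of_forall_not_transGen {α : Type*} [Finite α] {r : α → α → Prop}
    (h : ∀ a, ¬TransGen r a a) : WellFounded r :=
  haveI : Std.Irrefl (TransGen r) := ⟨h⟩
  Subrelation.wf TransGen.single (Finite.wellFounded_of_trans_of_irrefl (TransGen r))

section Digraph

variable {α : Type*} {A : Finset (α × α)}

theorem IsDAG.wellFounded [Finite α] (hdag : IsDAG A) : WellFounded (ArcAdj A) :=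
  wellFounded_of_forall_not_transGen hdag

theorem IsDAG.wellFounded_swap [Finite α] (hdag : IsDAG A) :
    WellFounded (Function.swap (ArcAdj A)) :=
  wellFounded_of_forall_not_transGen fun a h => hdag a (transGen_swap.1 h)

theorem IsDAG.nodup_of_isChain (hdag : IsDAG A) {p : List α} (hp : p.IsChain (ArcAdj A)) :
    p.Nodup := by
  refine (hp.imp fun _ _ => TransGen.single).pairwise.imp ?_
  rintro a _ h rfl
  exact hdag a h

theorem mem_arcsOf_iff_infix {e : α × α} {l : List α} : e ∈ arcsOf l ↔ [e.1, e.2] <:+: l := by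
  induction l with
  | nil => simp [arcsOf]
  | cons x t ih =>
    cases t with
    | nil => simp [arcsOf, List.infix_singleton_iff]
    | cons y t =>
      rw [show arcsOf (x :: y :: t) = (x, y) :: arcsOf (y :: t) from rfl, List.mem_cons, ih,
        List.infix_cons_iff (a := x)]
      simp [Prod.ext_iff]

theorem mem_arcsOf_of_infix {e : α × α} {l₁ l₂ : List α} (h : l₁ <:+: l₂)
    (he : e ∈ arcsOf l₁) : e ∈ arcsOf l₂ :=
  mem_arcsOf_iff_infix.2 ((mem_arcsOf_iff_infix.1 he).trans h)

theorem mem_arcsOf_append_append {e : α × α} {X Y Z : List α} (hY : Y ≠ [])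
    (he : e ∈ arcsOf (X ++ Y ++ Z)) : e ∈ arcsOf (X ++ Y) ∨ e ∈ arcsOf (Y ++ Z) := by
  simp only [mem_arcsOf_iff_infix] at he ⊢
  refine he.infix_append_or_infix_append ?_
  have := List.length_pos_iff.2 hY
  simp only [List.length_cons, List.length_nil]; omega

def IsWalk (A : Finset (α × α)) (u v : α) (p : List α) : Prop :=
  p.IsChain (ArcAdj A) ∧ p.head? = some u ∧ p.getLast? = some v

theorem exists_isWalk_of_reflTransGen {u v : α} (h : ReflTransGen (ArcAdj A) u v) :
    ∃ p, IsWalk A u v p := by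
  obtain ⟨p, hne, hp, hu, hv⟩ := List.exists_isChain_ne_nil_of_relationReflTransGen h
  exact ⟨p, hp, by rw [List.head?_eq_some_head hne, hu],
    by rw [List.getLast?_eq_some_getLast hne, hv]⟩

theorem IsWalk.ne_nil {u v : α} {p : List α} (hp : IsWalk A u v p) : p ≠ [] := by
  rintro rfl
  simp [IsWalk] at hp

theorem IsWalk.append {u v w x : α} {p q : List α} (hp : IsWalk A u v p) (hq : IsWalk A w x q)
    (hvw : (v, w) ∈ A) : IsWalk A u x (p ++ q) := by
  refine ⟨hp.1.append hq.1 ?_, by simp [List.head?_append, hp.2.1],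
    by simp [List.getLast?_append, hq.2.2]⟩
  simpa [hp.2.2, hq.2.1, ArcAdj] using hvw

variable [DecidableEq α]

theorem isSource_iff {v : α} : IsSource A v ↔ ∀ u, (u, v) ∉ A := by
  simp only [IsSource, inDeg, card_eq_zero, filter_eq_empty_iff, Prod.forall]
  exact ⟨fun h u hu => h u v hu rfl, fun h u w huw hw => h u (hw ▸ huw)⟩

theorem isSink_iff {v : α} : IsSink A v ↔ ∀ w, (v, w) ∉ A := by
  simp only [IsSink, outDeg, card_eq_zero, filter_eq_empty_iff, Prod.forall]
  exact ⟨fun h w hw => h v w hw rfl, fun h u w huw hu => h w (hu ▸ huw)⟩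

theorem exists_ne_of_one_lt_inDeg {v : α} (h : 1 < inDeg A v) :
    ∃ u₁ u₂, u₁ ≠ u₂ ∧ (u₁, v) ∈ A ∧ (u₂, v) ∈ A := by
  obtain ⟨e₁, h₁, e₂, h₂, hne⟩ := one_lt_card.1 h
  rw [mem_filter] at h₁ h₂
  refine ⟨e₁.1, e₂.1, fun h => hne (Prod.ext h (h₁.2.trans h₂.2.symm)), ?_, ?_⟩
  · rw [← h₁.2]; exact h₁.1
  · rw [← h₂.2]; exact h₂.1

theorem exists_ne_of_one_lt_outDeg {u : α} (h : 1 < outDeg A u) :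
    ∃ w₁ w₂, w₁ ≠ w₂ ∧ (u, w₁) ∈ A ∧ (u, w₂) ∈ A := by
  obtain ⟨e₁, h₁, e₂, h₂, hne⟩ := one_lt_card.1 h
  rw [mem_filter] at h₁ h₂
  refine ⟨e₁.2, e₂.2, fun h => hne (Prod.ext (h₁.2.trans h₂.2.symm) h), ?_, ?_⟩
  · rw [← h₁.2]; exact h₁.1
  · rw [← h₂.2]; exact h₂.1

theorem IsDAG.isSourceSinkPath (hdag : IsDAG A) {s t : α} {p : List α} (hp : IsWalk A s t p)
    (hlen : 2 ≤ p.length) (hs : IsSource A s) (ht : IsSink A t) : IsSourceSinkPath A p :=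
  ⟨hlen, hp.1, hdag.nodup_of_isChain hp.1, ⟨s, hp.2.1, hs⟩, ⟨t, hp.2.2, ht⟩⟩

theorem IsFunnel.eq_or_eq_of_forall_mem_arcsOf (hfun : IsFunnel A) {p q r : List α}
    (hp : IsSourceSinkPath A p) (hq : IsSourceSinkPath A q) (hr : IsSourceSinkPath A r)
    (hcover : ∀ e ∈ arcsOf p, e ∈ arcsOf q ∨ e ∈ arcsOf r) : p = q ∨ p = r := by
  obtain ⟨e, he, hpriv⟩ := hfun p hp
  exact (hcover e he).imp (fun heq => hpriv.unique ⟨hp, he⟩ ⟨hq, heq⟩)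
    (fun her => hpriv.unique ⟨hp, he⟩ ⟨hr, her⟩)

variable [Finite α]

theorem IsDAG.exists_isSource_mem (hdag : IsDAG A) {s : Set α} (hs : s.Nonempty)
    (hclosed : ∀ u v, (u, v) ∈ A → v ∈ s → u ∈ s) : ∃ v ∈ s, IsSource A v := by
  obtain ⟨v, hv, hmin⟩ := hdag.wellFounded.has_min s hs
  exact ⟨v, hv, isSource_iff.2 fun u huv => hmin u (hclosed u v huv hv) huv⟩

theorem IsDAG.exists_isSink_mem (hdag : IsDAG A) {s : Set α} (hs : s.Nonempty)
    (hclosed : ∀ u v, (u, v) ∈ A → u ∈ s → v ∈ s) : ∃ v ∈ s, IsSink A v := by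
  obtain ⟨v, hv, hmin⟩ := hdag.wellFounded_swap.has_min s hs
  exact ⟨v, hv, isSink_iff.2 fun w hvw => hmin w (hclosed v w hvw hv) hvw⟩

theorem IsDAG.exists_isSource_isWalk (hdag : IsDAG A) (v : α) :
    ∃ s p, IsSource A s ∧ IsWalk A s v p := by
  obtain ⟨s, hsv, hs⟩ := hdag.exists_isSource_mem (s := {u | ReflTransGen (ArcAdj A) u v})
    ⟨v, .refl⟩ fun _ _ huw hw => .head huw hw
  obtain ⟨p, hp⟩ := exists_isWalk_of_reflTransGen hsv
  exact ⟨s, p, hs, hp⟩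

theorem IsDAG.exists_isSink_isWalk (hdag : IsDAG A) (v : α) :
    ∃ t p, IsSink A t ∧ IsWalk A v t p := by
  obtain ⟨t, hvt, ht⟩ := hdag.exists_isSink_mem (s := {w | ReflTransGen (ArcAdj A) v w})
    ⟨v, .refl⟩ fun _ _ huw hu => .tail hu huw
  obtain ⟨p, hp⟩ := exists_isWalk_of_reflTransGen hvt
  exact ⟨t, p, ht, hp⟩

/-- With `P` a path from `a` to `b`, two in-arcs at `a` and two out-arcs at `b` would give a
source-sink path `S₁ P T₁` covered by `S₁ P T₂` and `S₂ P T₁`, hence without a private arc. -/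
theorem IsFunnel.outDeg_le_one_of_reflTransGen (hfun : IsFunnel A) (hdag : IsDAG A) {a b : α}
    (ha : 1 < inDeg A a) (hab : ReflTransGen (ArcAdj A) a b) : outDeg A b ≤ 1 := by
  by_contra! hb
  obtain ⟨u₁, u₂, hu, hu₁, hu₂⟩ := exists_ne_of_one_lt_inDeg ha
  obtain ⟨w₁, w₂, hw, hw₁, hw₂⟩ := exists_ne_of_one_lt_outDeg hb
  obtain ⟨P, hP⟩ := exists_isWalk_of_reflTransGen hab
  obtain ⟨s₁, S₁, hs₁, hS₁⟩ := hdag.exists_isSource_isWalk u₁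
  obtain ⟨s₂, S₂, hs₂, hS₂⟩ := hdag.exists_isSource_isWalk u₂
  obtain ⟨t₁, T₁, ht₁, hT₁⟩ := hdag.exists_isSink_isWalk w₁
  obtain ⟨t₂, T₂, ht₂, hT₂⟩ := hdag.exists_isSink_isWalk w₂
  have path : ∀ {s u w t : α} {S T : List α}, IsSource A s → IsWalk A s u S → (u, a) ∈ A →
      (b, w) ∈ A → IsWalk A w t T → IsSink A t → IsSourceSinkPath A (S ++ P ++ T) := by
    intro s u w t S T hs hS hua hbw hT ht
    refine hdag.isSourceSinkPath ((hS.append hP hua).append hT hbw) ?_ hs ht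
    have := List.length_pos_iff.2 hS.ne_nil
    have := List.length_pos_iff.2 hP.ne_nil
    simp only [List.length_append]; omega
  have hcover : ∀ e ∈ arcsOf (S₁ ++ P ++ T₁), e ∈ arcsOf (S₁ ++ P ++ T₂) ∨
      e ∈ arcsOf (S₂ ++ P ++ T₁) := by
    intro e he
    refine (mem_arcsOf_append_append hP.ne_nil he).imp (mem_arcsOf_of_infix ?_)
      (mem_arcsOf_of_infix ?_)
    · exact (List.prefix_append _ _).isInfix
    · rw [List.append_assoc]; exact (List.suffix_append _ _).isInfix
  rcases hfun.eq_or_eq_of_forall_mem_arcsOf (path hs₁ hS₁ hu₁ hw₁ hT₁ ht₁)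
    (path hs₁ hS₁ hu₁ hw₂ hT₂ ht₂) (path hs₂ hS₂ hu₂ hw₁ hT₁ ht₁) hcover with h | h
  · have h₁ := hT₁.2.1
    rw [List.append_cancel_left h, hT₂.2.1] at h₁
    exact hw (Option.some_injective _ h₁).symm
  · have h₁ := hS₁.2.2
    rw [List.append_cancel_right (List.append_cancel_right h), hS₂.2.2] at h₁
    exact hu (Option.some_injective _ h₁).symm

theorem IsDAG.card_filter_snd_mem_le (hdag : IsDAG A) {s : Finset α}
    (hclosed : ∀ u v, (u, v) ∈ A → v ∈ s → u ∈ s) (hdeg : ∀ v ∈ s, inDeg A v ≤ 1) :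
    #{e ∈ A | e.2 ∈ s} ≤ #s - 1 := by
  rcases s.eq_empty_or_nonempty with rfl | hs
  · simp
  obtain ⟨v, hv, hsrc⟩ := hdag.exists_isSource_mem (s := ↑s) hs (by exact_mod_cast hclosed)
  rw [← sum_card_fiberwise_eq_card_filter]
  exact sum_le_card_sub_one hv hsrc hdeg

theorem IsDAG.card_filter_fst_mem_le (hdag : IsDAG A) {s : Finset α}
    (hclosed : ∀ u v, (u, v) ∈ A → u ∈ s → v ∈ s) (hdeg : ∀ v ∈ s, outDeg A v ≤ 1) :
    #{e ∈ A | e.1 ∈ s} ≤ #s - 1 := by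
  rcases s.eq_empty_or_nonempty with rfl | hs
  · simp
  obtain ⟨v, hv, hsink⟩ := hdag.exists_isSink_mem (s := ↑s) hs (by exact_mod_cast hclosed)
  rw [← sum_card_fiberwise_eq_card_filter]
  exact sum_le_card_sub_one hv hsink hdeg

end Digraph

theorem IsDAG.card_le_of_inDeg_le_one_of_outDeg_le_one {A : Finset (V × V)} (hdag : IsDAG A)
    (M : Finset V) (hM : ∀ u v, (u, v) ∈ A → u ∈ M → v ∈ M) (hin : ∀ v ∉ M, inDeg A v ≤ 1)
    (hout : ∀ v ∈ M, outDeg A v ≤ 1) :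
    #A ≤ Fintype.card V ^ 2 / 4 + Fintype.card V - 2 := by
  have hinto := hdag.card_filter_snd_mem_le (s := Mᶜ)
    (fun u v huv hv => mem_compl.2 fun hu => mem_compl.1 hv (hM u v huv hu))
    (fun v hv => hin v (mem_compl.1 hv))
  have hfrom := hdag.card_filter_fst_mem_le hM hout
  have hcover : A ⊆ {e ∈ A | e.2 ∈ Mᶜ} ∪ {e ∈ A | e.1 ∈ M} ∪ Mᶜ ×ˢ M := by
    intro e he
    by_cases h₁ : e.1 ∈ M <;> by_cases h₂ : e.2 ∈ M <;> simp [he, h₁, h₂]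
  calc #A ≤ #{e ∈ A | e.2 ∈ Mᶜ} + #{e ∈ A | e.1 ∈ M} + #(Mᶜ ×ˢ M) :=
        (card_le_card hcover).trans
          ((card_union_le _ _).trans (Nat.add_le_add_right (card_union_le _ _) _))
    _ ≤ (#Mᶜ - 1) + (#M - 1) + #Mᶜ * #M := by rw [card_product]; omega
    _ ≤ _ := by
      rw [← card_compl_add_card M]
      exact Nat.sub_one_add_sub_one_add_mul_le _ _

/-- Every funnel `D = (V, A)` satisfies `|A| ≤ |V|²/4 + |V| - 2`
(in truncated natural-number arithmetic). -/
theorem funnel_card_arcs_le (A : Finset (V × V)) (hdag : IsDAG A)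
    (hfun : IsFunnel A) :
    A.card ≤ (Fintype.card V) ^ 2 / 4 + Fintype.card V - 2 := by
  classical
  let M : Finset V := {v | ∃ c, 1 < inDeg A c ∧ ReflTransGen (ArcAdj A) c v}
  have hmem {v : V} : v ∈ M ↔ ∃ c, 1 < inDeg A c ∧ ReflTransGen (ArcAdj A) c v := by simp [M]
  refine hdag.card_le_of_inDeg_le_one_of_outDeg_le_one M ?_ ?_ ?_
  · rintro u v huv hu
    obtain ⟨c, hc, hcu⟩ := hmem.1 hu
    exact hmem.2 ⟨c, hc, hcu.tail huv⟩
  · intro v hv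
    by_contra! h
    exact hv (hmem.2 ⟨v, h, .refl⟩)
  · intro v hv
    obtain ⟨c, hc, hcv⟩ := hmem.1 hv
    exact hfun.outDeg_le_one_of_reflTransGen hdag hc hcv
end

section
/- For every even integer n ≥ 2 there exists a funnel D = (V,A) with |V| = n vertices and exactly |A| = n²/4 + n − 2 arcs; hence the bound |A| ≤ |V|²/4 + |V| − 2 for funnels is sharp. -/
variable {V : Type*} [Fintype V] [DecidableEq V]

/-!
For `0 < m < n`, take the Hamiltonian path `0 → 1 → ⋯ → n-1` together with all `m (n - m)` arcs
from the first part `{0, …, m-1}` to the second part; the path arc `(m-1, m)` is counted twice, so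
there are `m (n - m) + n - 2` arcs, which is `n²/4 + n - 2` for `n = 2m`. The only source is `0`
and the only sink is `n-1`. Inside the first part every vertex has at most one in-neighbour, inside
the second part at most one out-neighbour, and these neighbours stay in the same part. So a
source-sink path through a crossing arc `(a, b)` is forced to be `0, …, a, b, …, n-1`: every
crossing arc is private, and every source-sink path crosses.
-/

namespace List

variable {α : Type*}

theorem mem_arcsOf_iff {p : List α} {x y : α} :
    (x, y) ∈ arcsOf p ↔ ∃ l r, p = l ++ x :: y :: r := by
  induction p with
  | nil => simp [arcsOf]
  | cons a t ih =>
    cases t with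
    | nil =>
      simp only [arcsOf, tail_cons, zip_nil_right, not_mem_nil, false_iff, not_exists]
      intro l r h
      have := congrArg length h
      simp only [length_cons, length_nil, zero_add, length_append] at this
      omega
    | cons b t =>
      change (x, y) ∈ (a, b) :: arcsOf (b :: t) ↔ _
      rw [mem_cons, ih]
      constructor
      · rintro (h | ⟨l, r, h⟩)
        · obtain ⟨rfl, rfl⟩ := Prod.ext_iff.1 h
          exact ⟨[], t, rfl⟩
        · exact ⟨a :: l, r, by rw [h, cons_append]⟩
      · rintro ⟨_ | ⟨c, l⟩, r, h⟩
        · simp_all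
        · simp only [cons_append, cons.injEq] at h
          exact Or.inr ⟨l, r, h.2⟩

theorem exists_mem_arcsOf_of_head?_of_getLast? {P : α → Prop} :
    ∀ {p : List α} {s t : α}, p.head? = some s → p.getLast? = some t → P s → ¬ P t →
      ∃ e ∈ arcsOf p, P e.1 ∧ ¬ P e.2
  | [], _, _, hs, _, _, _ => by simp at hs
  | [x], _, _, hs, ht, hPs, hPt => by simp_all
  | x :: y :: r, s, t, hs, ht, hPs, hPt => by
    obtain rfl : x = s := by simpa using hs
    by_cases hy : P y
    · obtain ⟨e, he, hPe⟩ := exists_mem_arcsOf_of_head?_of_getLast? (p := y :: r) rfl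
        (by rwa [getLast?_cons_cons] at ht) hy hPt
      exact ⟨e, mem_cons_of_mem _ he, hPe⟩
    · exact ⟨(x, y), mem_cons_self, hPs, hy⟩

end List

section Deterministic

variable {α : Type*} {R : α → α → Prop} {S : Set α}

def IsDeterministicOn (R : α → α → Prop) (S : Set α) : Prop :=
  ∀ x ∈ S, ∀ y, R x y → y ∈ S ∧ ∀ z, R x z → z = y

def IsDeadEndChain (R : α → α → Prop) (l : List α) : Prop :=
  l.IsChain R ∧ ∀ t ∈ l.getLast?, ∀ y, ¬ R t y

theorem IsDeterministicOn.eq_of_isDeadEndChain (h : IsDeterministicOn R S) :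
    ∀ {x : α} {r r' : List α}, x ∈ S → IsDeadEndChain R (x :: r) → IsDeadEndChain R (x :: r') →
      r = r'
  | _, [], [], _, _, _ => rfl
  | x, [], y :: _, _, ⟨_, hend⟩, ⟨hc', _⟩ =>
    absurd (List.isChain_cons_cons.1 hc').1 (hend x rfl y)
  | x, y :: _, [], _, ⟨hc, _⟩, ⟨_, hend'⟩ =>
    absurd (List.isChain_cons_cons.1 hc).1 (hend' x rfl y)
  | x, y :: r, y' :: r', hx, ⟨hc, hend⟩, ⟨hc', hend'⟩ => by
    rw [List.isChain_cons_cons] at hc hc'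
    obtain ⟨hyS, hy_uniq⟩ := h x hx y hc.1
    obtain rfl := hy_uniq y' hc'.1
    rw [h.eq_of_isDeadEndChain hyS ⟨hc.2, by simpa using hend⟩ ⟨hc'.2, by simpa using hend'⟩]

end Deterministic

section Digraph

variable {V : Type*} {A : Finset (V × V)}

theorem isDAG_of_lt {β : Type*} [Preorder β] (f : V → β) (hf : ∀ e ∈ A, f e.1 < f e.2) :
    IsDAG A := fun v hv => by
  have key : ∀ {x y}, Relation.TransGen (ArcAdj A) x y → f x < f y := fun h => by
    induction h with
    | single h => exact hf _ h
    | tail _ h ih => exact ih.trans (hf _ h)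
  exact lt_irrefl _ (key hv)

variable [DecidableEq V]

theorem IsSource.not_arcAdj {s : V} (hs : IsSource A s) (u : V) : ¬ ArcAdj A u s := fun hu => by
  rw [IsSource, inDeg, Finset.card_eq_zero, Finset.filter_eq_empty_iff] at hs
  exact hs hu rfl

theorem IsSink.not_arcAdj {t : V} (ht : IsSink A t) (u : V) : ¬ ArcAdj A t u := fun hu => by
  rw [IsSink, outDeg, Finset.card_eq_zero, Finset.filter_eq_empty_iff] at ht
  exact ht hu rfl

namespace IsSourceSinkPath

variable {p l r : List V} {x : V}

theorem isDeadEndChain_suffix (hp : IsSourceSinkPath A p) (hlr : p = l ++ x :: r) :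
    IsDeadEndChain (ArcAdj A) (x :: r) := by
  obtain ⟨-, hc, -, -, ⟨t, ht, hsink⟩⟩ := hp
  subst hlr
  refine ⟨hc.right_of_append, fun t' ht' => ?_⟩
  rw [List.getLast?_append_of_ne_nil _ (List.cons_ne_nil x r)] at ht
  obtain rfl : t = t' := Option.some_injective _ (ht.symm.trans ht')
  exact hsink.not_arcAdj

theorem isDeadEndChain_reverse_prefix (hp : IsSourceSinkPath A p) (hlr : p = l ++ x :: r) :
    IsDeadEndChain (flip (ArcAdj A)) (x :: l.reverse) := by
  obtain ⟨-, hc, -, ⟨s, hs, hsrc⟩, -⟩ := hp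
  subst hlr
  have hrev : (l ++ x :: r).reverse = r.reverse ++ x :: l.reverse := by simp
  refine ⟨?_, fun s' hs' => ?_⟩
  · have := List.isChain_reverse.2 hc
    rw [hrev] at this
    exact this.right_of_append
  · rw [← List.getLast?_reverse, hrev,
      List.getLast?_append_of_ne_nil _ (List.cons_ne_nil _ _)] at hs
    obtain rfl : s = s' := Option.some_injective _ (hs.symm.trans hs')
    exact hsrc.not_arcAdj

theorem eq_of_mem_arcsOf {S T : Set V} (hS : IsDeterministicOn (flip (ArcAdj A)) S)
    (hT : IsDeterministicOn (ArcAdj A) T) {a b : V} (ha : a ∈ S) (hb : b ∈ T) {p q : List V}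
    (hp : IsSourceSinkPath A p) (hq : IsSourceSinkPath A q)
    (hap : (a, b) ∈ arcsOf p) (haq : (a, b) ∈ arcsOf q) : p = q := by
  obtain ⟨l₁, r₁, rfl⟩ := List.mem_arcsOf_iff.1 hap
  obtain ⟨l₂, r₂, rfl⟩ := List.mem_arcsOf_iff.1 haq
  have hr : r₁ = r₂ := hT.eq_of_isDeadEndChain hb
    (hp.isDeadEndChain_suffix (l := l₁ ++ [a]) (by simp))
    (hq.isDeadEndChain_suffix (l := l₂ ++ [a]) (by simp))
  have hl : l₁.reverse = l₂.reverse := hS.eq_of_isDeadEndChain ha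
    (hp.isDeadEndChain_reverse_prefix rfl) (hq.isDeadEndChain_reverse_prefix rfl)
  rw [List.reverse_inj.1 hl, hr]

end IsSourceSinkPath

theorem isFunnel_of_isDeterministicOn {S : Set V} (hS : IsDeterministicOn (flip (ArcAdj A)) S)
    (hSc : IsDeterministicOn (ArcAdj A) Sᶜ) (hsrc : ∀ s, IsSource A s → s ∈ S)
    (hsnk : ∀ t, IsSink A t → t ∉ S) : IsFunnel A := by
  intro p hp
  obtain ⟨-, -, -, ⟨s, hs, hs_src⟩, ⟨t, ht, ht_snk⟩⟩ := id hp
  obtain ⟨⟨a, b⟩, hab, ha, hb⟩ :=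
    List.exists_mem_arcsOf_of_head?_of_getLast? hs ht (hsrc s hs_src) (hsnk t ht_snk)
  exact ⟨(a, b), hab, p, ⟨hp, hab⟩, fun q hq => hq.1.eq_of_mem_arcsOf hS hSc ha hb hp hq.2 hab⟩

end Digraph

open Finset

def crossingArcs (n m : ℕ) : Finset (Fin n × Fin n) := {e | (e.1 : ℕ) < m ∧ m ≤ e.2}

def successorArcs (n : ℕ) : Finset (Fin n × Fin n) := {e | (e.2 : ℕ) = e.1 + 1}

def pathBicliqueArcs (n m : ℕ) : Finset (Fin n × Fin n) := crossingArcs n m ∪ successorArcs n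

section PathBiclique

variable {n m : ℕ}

@[simp]
theorem mem_pathBicliqueArcs {x y : Fin n} :
    (x, y) ∈ pathBicliqueArcs n m ↔ (x : ℕ) < m ∧ m ≤ y ∨ (y : ℕ) = x + 1 := by
  simp [pathBicliqueArcs, crossingArcs, successorArcs]

theorem card_crossingArcs : #(crossingArcs n m) = m * (n - m) := by
  rw [crossingArcs, ← univ_product_univ,
    filter_product (fun x : Fin n => (x : ℕ) < m) (fun y : Fin n => m ≤ (y : ℕ)), card_product]
  simp only [← not_lt, filter_not, card_sdiff, inter_univ, card_univ, Fintype.card_fin,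
    Fin.card_filter_val_lt]
  rcases le_total m n with h | h <;> simp [h]

theorem card_successorArcs : #(successorArcs n) = n - 1 := by
  rw [← card_range (n - 1)]
  refine card_bij (fun e _ => (e.1 : ℕ)) ?_ ?_ ?_
  · intro e he
    simp only [successorArcs, mem_filter, mem_univ, true_and, mem_range] at he ⊢
    omega
  · intro e₁ h₁ e₂ h₂ h
    simp only [successorArcs, mem_filter, mem_univ, true_and] at h₁ h₂
    ext <;> omega
  · intro i hi
    rw [mem_range] at hi
    exact ⟨(⟨i, by omega⟩, ⟨i + 1, by omega⟩), by simp [successorArcs], rfl⟩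

theorem card_crossingArcs_inter_successorArcs (hm : 0 < m) (hmn : m < n) :
    #(crossingArcs n m ∩ successorArcs n) = 1 := by
  rw [card_eq_one]
  refine ⟨(⟨m - 1, by omega⟩, ⟨m, hmn⟩), ?_⟩
  ext ⟨x, y⟩
  simp only [crossingArcs, successorArcs, mem_inter, mem_filter, mem_univ, true_and, mem_singleton,
    Prod.mk.injEq, Fin.ext_iff]
  omega

theorem card_pathBicliqueArcs (hm : 0 < m) (hmn : m < n) :
    #(pathBicliqueArcs n m) = m * (n - m) + n - 2 := by
  have := card_union_add_card_inter (crossingArcs n m) (successorArcs n)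
  rw [card_crossingArcs_inter_successorArcs hm hmn, card_crossingArcs, card_successorArcs] at this
  rw [pathBicliqueArcs]
  omega

theorem isDAG_pathBicliqueArcs : IsDAG (pathBicliqueArcs n m) :=
  isDAG_of_lt (fun x : Fin n => (x : ℕ)) <| by
    rintro ⟨x, y⟩ h
    rw [mem_pathBicliqueArcs] at h
    dsimp only
    omega

theorem isFunnel_pathBicliqueArcs (hm : 0 < m) (hmn : m < n) : IsFunnel (pathBicliqueArcs n m) := by
  refine isFunnel_of_isDeterministicOn (S := {x | (x : ℕ) < m}) ?_ ?_ ?_ ?_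
  · intro x hx y hy
    simp only [Set.mem_ofPred_eq, flip, ArcAdj, mem_pathBicliqueArcs] at hx hy ⊢
    refine ⟨by omega, fun z hz => Fin.ext (by omega)⟩
  · intro x hx y hy
    simp only [Set.mem_compl_iff, Set.mem_ofPred_eq, not_lt, ArcAdj, mem_pathBicliqueArcs]
      at hx hy ⊢
    refine ⟨by omega, fun z hz => Fin.ext (by omega)⟩
  · intro s hs
    show (s : ℕ) < m
    by_contra hsm
    exact hs.not_arcAdj ⟨0, by omega⟩ (mem_pathBicliqueArcs.2 (.inl ⟨hm, not_lt.1 hsm⟩))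
  · intro t ht (htm : (t : ℕ) < m)
    exact ht.not_arcAdj ⟨m, hmn⟩ (mem_pathBicliqueArcs.2 (.inl ⟨htm, le_rfl⟩))

end PathBiclique

/-- For every even `n ≥ 2` there is a funnel on `n` vertices with
exactly `n²/4 + n - 2` arcs, so the arc bound for funnels is sharp. -/
theorem funnel_card_arcs_sharp (n : ℕ) (h2 : 2 ≤ n) (hev : Even n) :
    ∃ A : Finset (Fin n × Fin n), IsDAG A ∧ IsFunnel A ∧
      A.card = n ^ 2 / 4 + n - 2 := by
  obtain ⟨m, rfl⟩ := hev
  refine ⟨pathBicliqueArcs (m + m) m, isDAG_pathBicliqueArcs,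
    isFunnel_pathBicliqueArcs (by omega) (by omega), ?_⟩
  have hsq : (m + m) ^ 2 / 4 = m * m := by
    rw [show (m + m) ^ 2 = 4 * (m * m) by ring, Nat.mul_div_cancel_left _ (by norm_num)]
  rw [card_pathBicliqueArcs (by omega) (by omega), hsq, Nat.add_sub_cancel]
end

section
/- Let p, q ≥ 2 and let S(p,q) be the DAG with vertices c, a_1, ..., a_p, b_1, ..., b_q (all distinct) and arcs (a_i, c) for 1 ≤ i ≤ p and (c, b_j) for 1 ≤ j ≤ q. Then the arc-deletion distance to a funnel of S(p,q) equals min(p,q) − 1. -/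
variable {V : Type*} [Fintype V] [DecidableEq V]

/-- Vertices of `S(p,q)`: the center `c` and `a_1, …, a_p`, `b_1, …, b_q`. -/
abbrev SpqV (p q : ℕ) := Unit ⊕ (Fin p ⊕ Fin q)

/-- Arcs of `S(p,q)`: `(a_i, c)` for `1 ≤ i ≤ p` and `(c, b_j)` for `1 ≤ j ≤ q`. -/
def spqAdj (p q : ℕ) : SpqV p q → SpqV p q → Prop := fun a b =>
  (∃ i : Fin p, a = Sum.inr (Sum.inl i) ∧ b = Sum.inl ()) ∨
  (∃ j : Fin q, a = Sum.inl () ∧ b = Sum.inr (Sum.inr j))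

open Classical in
/-- The arc set of `S(p,q)`. -/
noncomputable def spqArcs (p q : ℕ) : Finset (SpqV p q × SpqV p q) :=
  Finset.univ.filter fun e => spqAdj p q e.1 e.2

/-!
As long as the centre `c` keeps an in-arc and an out-arc, the source-sink paths of a subdigraph
of `S(p,q)` are exactly the paths `a_i c b_j` through surviving arcs. Hence `(a_i, c)` is private
iff exactly one out-arc of `c` survives, and `(c, b_j)` iff exactly one in-arc survives. Deleting
all but one arc on the smaller side therefore gives a funnel, while deleting fewer than
`min(p,q) - 1` arcs leaves two arcs on each side of `c`, and then no arc of any path is private.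
-/

theorem Function.Injective.exists_pair_notMem {α β : Type*} [Fintype α] {f : α → β}
    (hf : Function.Injective f) {s : Finset β} (hs : s.card + 2 ≤ Fintype.card α) :
    ∃ x y, x ≠ y ∧ f x ∉ s ∧ f y ∉ s := by
  classical
  have hhit : (Finset.univ.filter fun x => f x ∈ s).card ≤ s.card :=
    Finset.card_le_card_of_injOn f (fun x hx => by simpa using hx) hf.injOn
  have hmiss : 1 < (Finset.univ.filter fun x => f x ∉ s).card := by
    have := Finset.card_filter_add_card_filter_not (s := Finset.univ) (fun x => f x ∈ s)
    rw [Finset.card_univ] at this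
    omega
  obtain ⟨x, hx, y, hy, hxy⟩ := Finset.one_lt_card.mp hmiss
  exact ⟨x, y, hxy, (Finset.mem_filter.mp hx).2, (Finset.mem_filter.mp hy).2⟩

section Digraph

variable {W : Type*} [DecidableEq W] {A : Finset (W × W)} {u v : W}

theorem not_isSource_of_mem (h : (u, v) ∈ A) : ¬ IsSource A v := by
  rw [IsSource, inDeg, Finset.card_eq_zero, Finset.filter_eq_empty_iff]
  exact fun h0 => h0 h rfl

theorem not_isSink_of_mem (h : (u, v) ∈ A) : ¬ IsSink A u := by
  rw [IsSink, outDeg, Finset.card_eq_zero, Finset.filter_eq_empty_iff]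
  exact fun h0 => h0 h rfl

end Digraph

theorem mem_arcsOf_triple {W : Type*} {x y z : W} {e : W × W} :
    e ∈ arcsOf [x, y, z] ↔ e = (x, y) ∨ e = (y, z) := by
  simp [arcsOf]

namespace SpqV

variable {p q : ℕ}

abbrev a (i : Fin p) : SpqV p q := Sum.inr (Sum.inl i)
abbrev b (j : Fin q) : SpqV p q := Sum.inr (Sum.inr j)
abbrev c : SpqV p q := Sum.inl ()

@[simp]
theorem mem_spqArcs {u v : SpqV p q} :
    (u, v) ∈ spqArcs p q ↔ (∃ i, u = a i ∧ v = c) ∨ (∃ j, u = c ∧ v = b j) := by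
  simp [spqArcs, spqAdj]

variable {A : Finset (SpqV p q × SpqV p q)} {i i₁ i₂ : Fin p} {j j₁ j₂ : Fin q}

theorem isSource_a (hA : A ⊆ spqArcs p q) (i : Fin p) : IsSource A (a i) := by
  rw [IsSource, inDeg, Finset.card_eq_zero, Finset.filter_eq_empty_iff]
  rintro ⟨u, v⟩ huv rfl
  simpa using hA huv

theorem isSink_b (hA : A ⊆ spqArcs p q) (j : Fin q) : IsSink A (b j) := by
  rw [IsSink, outDeg, Finset.card_eq_zero, Finset.filter_eq_empty_iff]
  rintro ⟨u, v⟩ huv rfl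
  simpa using hA huv

theorem isSourceSinkPath_a_c_b (hA : A ⊆ spqArcs p q) (hi : (a i, c) ∈ A) (hj : (c, b j) ∈ A) :
    IsSourceSinkPath A [a i, c, b j] :=
  ⟨by simp, List.isChain_cons_cons.mpr ⟨hi, List.isChain_pair.mpr hj⟩, by simp,
    ⟨a i, rfl, isSource_a hA i⟩, ⟨b j, rfl, isSink_b hA j⟩⟩

theorem eq_a_c_b_of_isSourceSinkPath (hA : A ⊆ spqArcs p q) (hc_src : ¬ IsSource A c)
    (hc_snk : ¬ IsSink A c) {P : List (SpqV p q)} (hP : IsSourceSinkPath A P) :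
    ∃ i j, (a i, c) ∈ A ∧ (c, b j) ∈ A ∧ P = [a i, c, b j] := by
  obtain ⟨hlen, hchain, -, ⟨s, hs, hsrc⟩, ⟨t, ht, hsnk⟩⟩ := hP
  rcases P with _ | ⟨x, _ | ⟨y, rest⟩⟩
  · simp at hlen
  · simp at hlen
  obtain ⟨hxy, htail⟩ := List.isChain_cons_cons.mp hchain
  obtain rfl : x = s := by simpa using hs
  rcases mem_spqArcs.mp (hA hxy) with ⟨i, rfl, rfl⟩ | ⟨j, rfl, -⟩
  swap
  · exact absurd hsrc hc_src
  rcases rest with _ | ⟨z, _ | ⟨w, rest⟩⟩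
  · obtain rfl : c = t := by simpa using ht
    exact absurd hsnk hc_snk
  · have hcz : (c, z) ∈ A := List.isChain_pair.mp htail
    obtain ⟨j, rfl⟩ : ∃ j, z = b j := by simpa using hA hcz
    exact ⟨i, j, hxy, hcz, rfl⟩
  · obtain ⟨hcz, hzw⟩ := List.isChain_cons_cons.mp htail
    obtain ⟨j, rfl⟩ : ∃ j, z = b j := by simpa using hA hcz
    simpa using hA (List.isChain_cons_cons.mp hzw).1

theorem isPrivate_a_c (hA : A ⊆ spqArcs p q) (hi : (a i, c) ∈ A) (hj : (c, b j) ∈ A)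
    (hb : ∀ j', (c, b j') ∈ A → j' = j) : IsPrivate A (a i, c) := by
  refine ⟨[a i, c, b j], ⟨isSourceSinkPath_a_c_b hA hi hj, by simp [mem_arcsOf_triple]⟩, ?_⟩
  rintro P ⟨hP, he⟩
  obtain ⟨i', j', -, hj', rfl⟩ :=
    eq_a_c_b_of_isSourceSinkPath hA (not_isSource_of_mem hi) (not_isSink_of_mem hj) hP
  obtain rfl := hb j' hj'
  obtain rfl : i = i' := by simpa [mem_arcsOf_triple] using he
  rfl

theorem isPrivate_c_b (hA : A ⊆ spqArcs p q) (hi : (a i, c) ∈ A) (hj : (c, b j) ∈ A)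
    (ha : ∀ i', (a i', c) ∈ A → i' = i) : IsPrivate A (c, b j) := by
  refine ⟨[a i, c, b j], ⟨isSourceSinkPath_a_c_b hA hi hj, by simp [mem_arcsOf_triple]⟩, ?_⟩
  rintro P ⟨hP, he⟩
  obtain ⟨i', j', hi', -, rfl⟩ :=
    eq_a_c_b_of_isSourceSinkPath hA (not_isSource_of_mem hi) (not_isSink_of_mem hj) hP
  obtain rfl := ha i' hi'
  obtain rfl : j = j' := by simpa [mem_arcsOf_triple] using he
  rfl

theorem isFunnel_of_unique (hA : A ⊆ spqArcs p q) (hi : (a i, c) ∈ A) (hj : (c, b j) ∈ A)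
    (h : (∀ i', (a i', c) ∈ A → i' = i) ∨ (∀ j', (c, b j') ∈ A → j' = j)) : IsFunnel A := by
  intro P hP
  obtain ⟨i', j', hi', hj', rfl⟩ :=
    eq_a_c_b_of_isSourceSinkPath hA (not_isSource_of_mem hi) (not_isSink_of_mem hj) hP
  rcases h with ha | hb
  · obtain rfl := ha i' hi'
    exact ⟨(c, b j'), by simp [mem_arcsOf_triple], isPrivate_c_b hA hi' hj' ha⟩
  · obtain rfl := hb j' hj'
    exact ⟨(a i', c), by simp [mem_arcsOf_triple], isPrivate_a_c hA hi' hj' hb⟩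

theorem not_isFunnel_of_ne_of_ne (hA : A ⊆ spqArcs p q) (hi : i₁ ≠ i₂) (hj : j₁ ≠ j₂)
    (hi₁ : (a i₁, c) ∈ A) (hi₂ : (a i₂, c) ∈ A) (hj₁ : (c, b j₁) ∈ A) (hj₂ : (c, b j₂) ∈ A) :
    ¬ IsFunnel A := by
  intro hf
  obtain ⟨e, he, hpriv⟩ := hf _ (isSourceSinkPath_a_c_b hA hi₁ hj₁)
  rcases mem_arcsOf_triple.mp he with rfl | rfl
  · have := hpriv.unique ⟨isSourceSinkPath_a_c_b hA hi₁ hj₁, he⟩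
      ⟨isSourceSinkPath_a_c_b hA hi₁ hj₂, by simp [mem_arcsOf_triple]⟩
    exact hj (by simpa using this)
  · have := hpriv.unique ⟨isSourceSinkPath_a_c_b hA hi₁ hj₁, he⟩
      ⟨isSourceSinkPath_a_c_b hA hi₂ hj₁, by simp [mem_arcsOf_triple]⟩
    exact hi (by simpa using this)

theorem exists_isFunnel_sdiff (hp : 1 ≤ p) (hq : 1 ≤ q) :
    ∃ B ⊆ spqArcs p q, B.card = min p q - 1 ∧ IsFunnel (spqArcs p q \ B) := by
  let i₀ : Fin p := ⟨0, hp⟩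
  let j₀ : Fin q := ⟨0, hq⟩
  rcases le_total p q with hpq | hqp
  · refine ⟨(Finset.univ.erase i₀).image fun i => (a i, c), by simp [Finset.subset_iff], ?_,
      isFunnel_of_unique Finset.sdiff_subset (i := i₀) (j := j₀) (by simp) (by simp) (Or.inl ?_)⟩
    · rw [Finset.card_image_of_injective _ (fun _ _ => by simp), Finset.card_erase_of_mem
        (Finset.mem_univ _), Finset.card_univ, Fintype.card_fin, min_eq_left hpq]
    · simp
  · refine ⟨(Finset.univ.erase j₀).image fun j => (c, b j), by simp [Finset.subset_iff], ?_,
      isFunnel_of_unique Finset.sdiff_subset (i := i₀) (j := j₀) (by simp) (by simp) (Or.inr ?_)⟩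
    · rw [Finset.card_image_of_injective _ (fun _ _ => by simp), Finset.card_erase_of_mem
        (Finset.mem_univ _), Finset.card_univ, Fintype.card_fin, min_eq_right hqp]
    · simp

theorem min_sub_one_le_card_of_isFunnel {B : Finset (SpqV p q × SpqV p q)}
    (hf : IsFunnel (spqArcs p q \ B)) : min p q - 1 ≤ B.card := by
  by_contra! h
  have ha : Function.Injective fun i : Fin p => ((a i, c) : SpqV p q × SpqV p q) :=
    fun _ _ h => by simpa using h
  have hb : Function.Injective fun j : Fin q => ((c, b j) : SpqV p q × SpqV p q) :=
    fun _ _ h => by simpa using h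
  obtain ⟨i₁, i₂, hi, hi₁, hi₂⟩ := ha.exists_pair_notMem (s := B) (by rw [Fintype.card_fin]; omega)
  obtain ⟨j₁, j₂, hj, hj₁, hj₂⟩ := hb.exists_pair_notMem (s := B) (by rw [Fintype.card_fin]; omega)
  exact not_isFunnel_of_ne_of_ne Finset.sdiff_subset hi hj (by simpa using hi₁) (by simpa using hi₂)
    (by simpa using hj₁) (by simpa using hj₂) hf

end SpqV

/-- For `p, q ≥ 2`, the arc-deletion distance to a funnel of
`S(p,q)` equals `min(p,q) - 1`. -/
theorem spq_funnelDist (p q : ℕ) (hp : 2 ≤ p) (hq : 2 ≤ q) :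
    funnelDist (spqArcs p q) = min p q - 1 := by
  obtain ⟨B, hB, hcard, hf⟩ := SpqV.exists_isFunnel_sdiff (p := p) (q := q) (by omega) (by omega)
  refine IsLeast.csInf_eq ⟨⟨B, hB, hcard, hf⟩, ?_⟩
  rintro k ⟨B', -, rfl, hf'⟩
  exact SpqV.min_sub_one_le_card_of_isFunnel hf'
end
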